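/- There does not exist an asymptotically flat graph G of dimension n = 2 with E(G) > 0. -/

import Mathlib

open Filter Topology

noncomputable section

namespace PMT

/-- The `i`-th standard unit vector in `ℤⁿ`. -/
def e (n : ℕ) (i : Fin n) : Fin n → ℤ := fun j => if j = i then 1 else 0

/-- The grid graph on `ℤⁿ`: `x ∼ y` iff `‖x − y‖₁ = 1`. -/
def grid (n : ℕ) : SimpleGraph (Fin n → ℤ) where
  Adj x y := (∑ i, |x i - y i|) = 1
  symm := by
    constructor
    intro x y (h : (∑ i, |x i - y i|) = 1)
    show (∑ i, |y i - x i|) = 1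
    have h' : ∀ i ∈ Finset.univ, |y i - x i| = |x i - y i| :=
      fun i _ => abs_sub_comm _ _
    rw [Finset.sum_congr rfl h']
    exact h
  loopless := by constructor; intro x (h : (∑ i, |x i - x i|) = 1); simp at h

/-- The graph Laplacian `Δf(x) = Σ_{y∼x} w(x,y)(f(y)−f(x))` of an integer-valued function. -/
def lap {V : Type*} (G : SimpleGraph V) (w : V → V → ℝ) (f : V → ℤ) (x : V) : ℝ :=
  ∑ᶠ y ∈ {y | G.Adj x y}, w x y * ((f y : ℝ) - (f x : ℝ))

/-- `f : V → ℤ` is 1-Lipschitz with respect to the combinatorial graph distance. -/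
def Lip1 {V : Type*} (G : SimpleGraph V) (f : V → ℤ) : Prop :=
  ∀ x y, |f x - f y| ≤ (G.dist x y : ℤ)

/-- Ollivier curvature of the pair `(x, y)`:
`κ(x,y) = inf {Δf(x) − Δf(y) | f : V → ℤ, f 1-Lipschitz, f(y) = f(x) + 1}`. -/
def kappa {V : Type*} (G : SimpleGraph V) (w : V → V → ℝ) (x y : V) : ℝ :=
  sInf {r | ∃ f : V → ℤ, Lip1 G f ∧ f y = f x + 1 ∧ r = lap G w f x - lap G w f y}

/-- Scalar curvature `R(x) = Σ_{y∼x} κ(x,y)`. -/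
def scal {V : Type*} (G : SimpleGraph V) (w : V → V → ℝ) (x : V) : ℝ :=
  ∑ᶠ y ∈ {y | G.Adj x y}, kappa G w x y

/-- A weighted grid graph `(ℤⁿ, w)`: symmetric weights, positive on edges. -/
structure GridWeight (n : ℕ) where
  w : (Fin n → ℤ) → (Fin n → ℤ) → ℝ
  symm : ∀ x y, w x y = w y x
  pos : ∀ x y, (grid n).Adj x y → 0 < w x y

/-- The quantity `Abs(x)` measuring the distortion from the standard grid graph. -/
def Absf (n : ℕ) (w : (Fin n → ℤ) → (Fin n → ℤ) → ℝ) (x : Fin n → ℤ) : ℝ :=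
  ∑ i, ∑ j, if i ≠ j then
      (|w x (x + e n i) - w (x + e n j) (x + e n j + e n i)| +
       |w x (x + e n i) - w (x - e n j) (x - e n j + e n i)| +
       |w x (x - e n i) - w (x + e n j) (x + e n j - e n i)| +
       |w x (x - e n i) - w (x - e n j) (x - e n j - e n i)|)
    else 0

/-- The `ℓ^∞` norm `‖x‖_∞` of `x ∈ ℤⁿ`, as a natural number. -/
def nInf {n : ℕ} (x : Fin n → ℤ) : ℕ := Finset.univ.sup fun i => (x i).natAbs

/-- The cube `Q_r = {y ∈ ℤⁿ : ‖y‖∞ ≤ r}` as a finset. -/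
def Qr (n r : ℕ) : Finset (Fin n → ℤ) := Finset.Icc (fun _ => -(r : ℤ)) (fun _ => (r : ℤ))

/-- `Σ_{e ∈ E_r} w(e)`: the sum of weights of edges with exactly one endpoint in `Q_r`
(each such edge is counted once, via its endpoint inside `Q_r`). -/
def ErSum (n : ℕ) (w : (Fin n → ℤ) → (Fin n → ℤ) → ℝ) (r : ℕ) : ℝ :=
  ∑ x ∈ Qr n r, ∑ i,
    ((if x + e n i ∉ Qr n r then w x (x + e n i) else 0) +
     (if x - e n i ∉ Qr n r then w x (x - e n i) else 0))

/-- `Σ_{τ ∈ Ẽ_r} w(τ)`: the sum of weights of edges joining the sphere `S_{r+1}` to the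
sphere `S_{r+2}` (each such edge is counted once, via its endpoint in `S_{r+1}`). -/
def TErSum (n : ℕ) (w : (Fin n → ℤ) → (Fin n → ℤ) → ℝ) (r : ℕ) : ℝ :=
  ∑ x ∈ Qr n (r + 1), if nInf x = r + 1 then
      (∑ i, ((if nInf (x + e n i) = r + 2 then w x (x + e n i) else 0) +
             (if nInf (x - e n i) = r + 2 then w x (x - e n i) else 0)))
    else 0

/-- The weighted grid graph `(ℤⁿ, w)` is asymptotically flat: there is `p > n` with
`w = 1 + o(1)`, `Abs(x) = O(‖x‖∞^{−p})` and `|R(x)| = O(‖x‖∞^{−p})` as `‖x‖∞ → ∞`. -/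
def AsympFlatGrid (n : ℕ) (W : GridWeight n) : Prop :=
  ∃ p : ℝ, (n : ℝ) < p ∧
    (∀ ε : ℝ, 0 < ε → ∃ M : ℕ, ∀ x y, (grid n).Adj x y → M ≤ nInf x → |W.w x y - 1| ≤ ε) ∧
    (∃ C : ℝ, ∃ M : ℕ, 0 < M ∧ ∀ x, M ≤ nInf x → Absf n W.w x ≤ C * (nInf x : ℝ) ^ (-p)) ∧
    (∃ C : ℝ, ∃ M : ℕ, 0 < M ∧ ∀ x, M ≤ nInf x → |scal (grid n) W.w x| ≤ C * (nInf x : ℝ) ^ (-p))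


/-- A weighted graph: simple, undirected, connected, locally finite,
with symmetric positive edge weights. -/
structure WGraph (V : Type) where
  G : SimpleGraph V
  w : V → V → ℝ
  symm : ∀ x y, w x y = w y x
  pos : ∀ x y, G.Adj x y → 0 < w x y
  locFin : ∀ x : V, {y | G.Adj x y}.Finite
  conn : G.Connected

/-- The weighted graph `W` is asymptotically flat with asymptotic model the
asymptotically flat weighted grid graph `Wg` on `ℤⁿ`: outside a finite set `K`, `W` is
weighted isomorphic (via `Φ`) to the complement of the cube `Q_r` in `(ℤⁿ, Wg.w)`, and
there are no edges between `K` and `Φ⁻¹(ℤⁿ ∖ Q_{r+1})`. -/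
def AsympFlatPair {V : Type} (n : ℕ) (W : WGraph V) (Wg : GridWeight n) : Prop :=
  AsympFlatGrid n Wg ∧
  ∃ (K : Set V) (r : ℕ) (Φ : V → (Fin n → ℤ)),
    K.Finite ∧ 0 < r ∧
    Set.BijOn Φ Kᶜ {x | r < nInf x} ∧
    (∀ u v, u ∉ K → v ∉ K → (W.G.Adj u v ↔ (grid n).Adj (Φ u) (Φ v))) ∧
    (∀ u v, u ∉ K → v ∉ K → W.G.Adj u v → W.w u v = Wg.w (Φ u) (Φ v)) ∧
    (∀ u v, u ∈ K → v ∉ K → r + 1 < nInf (Φ v) → ¬ W.G.Adj u v)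

/-! Telescoping `Absf` along a ray perpendicular to an edge at distance `m` from the origin, and
using `w → 1` at infinity, gives `|w - 1| = O(m^{1-p})`. Pairing each of the `O(r^{n-1})` edges
leaving `Q_r` with the parallel edge that continues it from `S_{r+1}` to `S_{r+2}` (the remaining
edges of `Ẽ_r` only help, weights being positive) bounds `ErSum - TErSum` by
`O(r^{n-1} · r^{1-p}) = O(r^{n-p})`, which tends to `0` because `p > n`. So in every dimension
`n ≥ 2` the limit defining the mass is nonpositive. -/

def boolSign (b : Bool) : ℤ := if b then 1 else -1

def dir (n : ℕ) (i : Fin n) (b : Bool) : Fin n → ℤ := boolSign b • e n i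

section Coordinates

variable {n : ℕ}

lemma add_dir_true (x : Fin n → ℤ) (i : Fin n) : x + dir n i true = x + e n i := by
  simp [dir, boolSign]

lemma add_dir_false (x : Fin n → ℤ) (i : Fin n) : x + dir n i false = x - e n i := by
  simp [dir, boolSign, sub_eq_add_neg]

lemma add_smul_dir_apply (x : Fin n → ℤ) (c : ℤ) (i : Fin n) (b : Bool) (k : Fin n) :
    (x + c • dir n i b) k = x k + if k = i then c * boolSign b else 0 := by
  by_cases hk : k = i <;> simp [dir, e, hk]

lemma add_dir_apply (x : Fin n → ℤ) (i : Fin n) (b : Bool) (k : Fin n) :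
    (x + dir n i b) k = x k + if k = i then boolSign b else 0 := by
  simpa using add_smul_dir_apply x 1 i b k

lemma grid_adj_add_dir (x : Fin n → ℤ) (i : Fin n) (b : Bool) :
    (grid n).Adj x (x + dir n i b) := by
  change ∑ k, |x k - (x + dir n i b) k| = 1
  simp_rw [add_dir_apply, sub_add_cancel_left, abs_neg, apply_ite (|·|)]
  cases b <;> simp [boolSign]

lemma natAbs_le_nInf (x : Fin n → ℤ) (i : Fin n) : (x i).natAbs ≤ nInf x :=
  Finset.le_sup (f := fun i => (x i).natAbs) (Finset.mem_univ i)

lemma nInf_le_iff {x : Fin n → ℤ} {c : ℕ} : nInf x ≤ c ↔ ∀ i, (x i).natAbs ≤ c := by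
  simp [nInf, Finset.sup_le_iff]

lemma mem_Qr_iff {r : ℕ} {x : Fin n → ℤ} : x ∈ Qr n r ↔ nInf x ≤ r := by
  simp only [Qr, Finset.mem_Icc, Pi.le_def, nInf_le_iff, ← forall_and]
  refine forall_congr' fun i => ?_
  omega

lemma natAbs_add_smul_dir_apply {x : Fin n → ℤ} {j : Fin n} {b : Bool}
    (hb : 0 ≤ boolSign b * x j) (s : ℕ) (k : Fin n) :
    ((x + (s : ℤ) • dir n j b) k).natAbs = (x k).natAbs + if k = j then s else 0 := by
  rw [add_smul_dir_apply]
  by_cases hk : k = j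
  · subst hk
    cases b <;> simp only [boolSign, if_true, Bool.false_eq_true, if_false] at hb ⊢ <;> omega
  · simp [hk]

lemma max_nInf_le_nInf_add_smul_dir {x : Fin n → ℤ} {j : Fin n} {b : Bool}
    (hb : 0 ≤ boolSign b * x j) (s : ℕ) :
    max (nInf x) s ≤ nInf (x + (s : ℤ) • dir n j b) := by
  refine max_le (nInf_le_iff.mpr fun k => ?_) ?_
  · exact (natAbs_add_smul_dir_apply hb s k ▸ Nat.le_add_right _ _).trans (natAbs_le_nInf _ k)
  · have := natAbs_add_smul_dir_apply hb s j
    simp only [if_true] at this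
    exact (Nat.le_add_left s _).trans (this ▸ natAbs_le_nInf _ j)

lemma nInf_add_smul_dir {x : Fin n → ℤ} {j : Fin n} {b : Bool}
    (hb : boolSign b * x j = nInf x) (s : ℕ) :
    nInf (x + (s : ℤ) • dir n j b) = nInf x + s := by
  have hb' : 0 ≤ boolSign b * x j := hb ▸ Int.natCast_nonneg _
  have hxj : (x j).natAbs = nInf x := by
    cases b <;> simp only [boolSign, if_true, Bool.false_eq_true, if_false] at hb <;> omega
  refine le_antisymm (nInf_le_iff.mpr fun k => ?_) ?_
  · rw [natAbs_add_smul_dir_apply hb' s k]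
    have := natAbs_le_nInf x k
    split_ifs <;> omega
  · have := natAbs_le_nInf (x + (s : ℤ) • dir n j b) j
    rwa [natAbs_add_smul_dir_apply hb' s j, if_pos rfl, hxj] at this

end Coordinates

lemma rpow_neg_le_of_max_le {p m s b : ℝ} (hp : 2 ≤ p) (hm : 1 ≤ m) (hs : 0 ≤ s)
    (hb : max m s ≤ b) : b ^ (-p) ≤ 8 * m ^ (2 - p) * ((m + s)⁻¹ - (m + s + 1)⁻¹) := by
  have hmb : m ≤ b := le_of_max_le_left hb
  have hsb : s ≤ b := le_of_max_le_right hb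
  have hb0 : 0 < b := by linarith
  have hsplit : b ^ (-p) = b ^ (2 - p) * (b ^ 2)⁻¹ := by
    rw [← Real.rpow_natCast, ← Real.rpow_neg hb0.le, ← Real.rpow_add hb0]
    ring_nf
  have hpow : b ^ (2 - p) ≤ m ^ (2 - p) :=
    Real.rpow_le_rpow_of_nonpos (by linarith) hmb (by linarith)
  have hsq : (b ^ 2)⁻¹ ≤ 8 * ((m + s)⁻¹ - (m + s + 1)⁻¹) := by
    rw [inv_sub_inv (by positivity) (by positivity), add_sub_cancel_left, mul_one_div,
      inv_le_comm₀ (by positivity) (by positivity), inv_div, div_le_iff₀ (by norm_num)]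
    nlinarith
  rw [hsplit, mul_comm (8 : ℝ), mul_assoc]
  exact mul_le_mul hpow hsq (by positivity) (by positivity)

lemma sum_range_rpow_neg_le {p m : ℝ} (hp : 2 ≤ p) (hm : 1 ≤ m) {b : ℕ → ℝ}
    (hb : ∀ s : ℕ, max m s ≤ b s) (T : ℕ) :
    ∑ s ∈ Finset.range T, b s ^ (-p) ≤ 8 * m ^ (1 - p) := by
  have hm0 : 0 < m := by linarith
  calc ∑ s ∈ Finset.range T, b s ^ (-p)
      ≤ ∑ s ∈ Finset.range T, 8 * m ^ (2 - p) * ((m + s)⁻¹ - (m + (s + 1 : ℕ))⁻¹) :=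
        Finset.sum_le_sum fun s _ => by
          simpa [add_assoc] using rpow_neg_le_of_max_le hp hm s.cast_nonneg (hb s)
    _ = 8 * m ^ (2 - p) * (m⁻¹ - (m + T)⁻¹) := by
        rw [← Finset.mul_sum, Finset.sum_range_sub' (fun s : ℕ => (m + s)⁻¹)]
        simp
    _ ≤ 8 * m ^ (2 - p) * m⁻¹ := by
        gcongr
        exact sub_le_self _ (by positivity)
    _ = 8 * m ^ (1 - p) := by
        rw [mul_assoc, ← Real.rpow_neg_one, ← Real.rpow_add hm0]
        ring_nf

section Weights

variable {n : ℕ} (w : (Fin n → ℤ) → (Fin n → ℤ) → ℝ)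

lemma Absf_nonneg (x : Fin n → ℤ) : 0 ≤ Absf n w x :=
  Finset.sum_nonneg fun i _ => Finset.sum_nonneg fun j _ => by split_ifs <;> positivity

lemma abs_sub_le_Absf (x : Fin n → ℤ) {i j : Fin n} (hij : i ≠ j) (bi bj : Bool) :
    |w x (x + dir n i bi) - w (x + dir n j bj) (x + dir n j bj + dir n i bi)| ≤ Absf n w x := by
  have hnn : ∀ i' j' : Fin n, 0 ≤ if i' ≠ j' then
      (|w x (x + e n i') - w (x + e n j') (x + e n j' + e n i')| +
       |w x (x + e n i') - w (x - e n j') (x - e n j' + e n i')| +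
       |w x (x - e n i') - w (x + e n j') (x + e n j' - e n i')| +
       |w x (x - e n i') - w (x - e n j') (x - e n j' - e n i')|) else 0 := fun _ _ => by
    split_ifs <;> positivity
  refine le_trans ?_ (Finset.single_le_sum
    (fun i' _ => Finset.sum_nonneg fun j' _ => hnn i' j') (Finset.mem_univ i))
  refine le_trans ?_ (Finset.single_le_sum (fun j' _ => hnn i j') (Finset.mem_univ j))
  rw [if_pos hij]
  cases bi <;> cases bj <;> simp only [add_dir_true, add_dir_false] <;>
    linarith [abs_nonneg (w x (x + e n i) - w (x + e n j) (x + e n j + e n i)),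
      abs_nonneg (w x (x + e n i) - w (x - e n j) (x - e n j + e n i)),
      abs_nonneg (w x (x - e n i) - w (x + e n j) (x + e n j - e n i)),
      abs_nonneg (w x (x - e n i) - w (x - e n j) (x - e n j - e n i))]

lemma abs_sub_le_sum_Absf (x : Fin n → ℤ) {i j : Fin n} (hij : i ≠ j) (bi bj : Bool)
    (T : ℕ) :
    |w x (x + dir n i bi) -
        w (x + (T : ℤ) • dir n j bj) (x + (T : ℤ) • dir n j bj + dir n i bi)| ≤
      ∑ s ∈ Finset.range T, Absf n w (x + (s : ℤ) • dir n j bj) := by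
  set a : ℕ → ℝ := fun s =>
    w (x + (s : ℤ) • dir n j bj) (x + (s : ℤ) • dir n j bj + dir n i bi)
  have hstep (s : ℕ) : dist (a s) (a (s + 1)) ≤ Absf n w (x + (s : ℤ) • dir n j bj) := by
    have hsucc :
        x + ((s + 1 : ℕ) : ℤ) • dir n j bj = x + (s : ℤ) • dir n j bj + dir n j bj := by
      rw [Nat.cast_succ, add_smul, one_smul, add_assoc]
    simpa only [a, Real.dist_eq, hsucc] using
      abs_sub_le_Absf w (x + (s : ℤ) • dir n j bj) hij bi bj
  simpa [a, Real.dist_eq] using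
    (dist_le_range_sum_dist a T).trans (Finset.sum_le_sum fun s _ => hstep s)

end Weights

section Decay

variable {n : ℕ} {w : (Fin n → ℤ) → (Fin n → ℤ) → ℝ} {p C : ℝ} {M : ℕ}

lemma nonneg_of_Absf_le (hn : 1 ≤ n) (hM : 0 < M)
    (hA : ∀ x, M ≤ nInf x → Absf n w x ≤ C * (nInf x : ℝ) ^ (-p)) : 0 ≤ C := by
  set x : Fin n → ℤ := fun _ => M
  have hx : nInf x = M :=
    le_antisymm (nInf_le_iff.mpr fun _ => by simp [x])
      (by simpa [x] using natAbs_le_nInf x ⟨0, hn⟩)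
  have h := (Absf_nonneg w x).trans (hA x hx.ge)
  rw [hx] at h
  exact nonneg_of_mul_nonneg_left h (Real.rpow_pos_of_pos (by exact_mod_cast hM) _)

lemma abs_weight_sub_one_le (hn : 2 ≤ n) (hp : 2 ≤ p) (hM : 0 < M) (hC : 0 ≤ C)
    (hw : ∀ ε : ℝ, 0 < ε →
      ∃ M : ℕ, ∀ x y, (grid n).Adj x y → M ≤ nInf x → |w x y - 1| ≤ ε)
    (hA : ∀ x, M ≤ nInf x → Absf n w x ≤ C * (nInf x : ℝ) ^ (-p))
    {m : ℕ} (hm : M ≤ m) {x : Fin n → ℤ} (hx : m ≤ nInf x) (i : Fin n) (b : Bool) :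
    |w x (x + dir n i b) - 1| ≤ 8 * C * (m : ℝ) ^ (1 - p) := by
  have : Nontrivial (Fin n) := Fin.nontrivial_iff_two_le.mpr hn
  obtain ⟨j, hji⟩ := exists_ne i
  -- walk outward along axis `j`, so that the `s`-th point has `nInf ≥ max m s`
  set bj := decide (0 ≤ x j)
  have hbj : 0 ≤ boolSign bj * x j := by
    by_cases h : 0 ≤ x j <;> simp [bj, boolSign, h]; omega
  set q : ℕ → Fin n → ℤ := fun s => x + (s : ℤ) • dir n j bj
  have hq : ∀ s : ℕ, max m s ≤ nInf (q s) := fun s =>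
    (max_le_max_right s hx).trans (max_nInf_le_nInf_add_smul_dir hbj s)
  have hm1 : (1 : ℝ) ≤ m := by exact_mod_cast hM.trans_le hm
  have htranslate : ∀ T : ℕ,
      |w x (x + dir n i b) - w (q T) (q T + dir n i b)| ≤ 8 * C * (m : ℝ) ^ (1 - p) :=
    fun T => calc
      _ ≤ ∑ s ∈ Finset.range T, Absf n w (q s) := abs_sub_le_sum_Absf w x hji.symm b bj T
      _ ≤ ∑ s ∈ Finset.range T, C * (nInf (q s) : ℝ) ^ (-p) :=
        Finset.sum_le_sum fun s _ => hA _ (hm.trans (le_of_max_le_left (hq s)))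
      _ ≤ C * (8 * (m : ℝ) ^ (1 - p)) := by
        rw [← Finset.mul_sum]
        exact mul_le_mul_of_nonneg_left
          (sum_range_rpow_neg_le hp hm1 (fun s => by exact_mod_cast hq s) T) hC
      _ = 8 * C * (m : ℝ) ^ (1 - p) := by ring
  refine le_of_forall_pos_le_add fun ε hε => ?_
  obtain ⟨T, hT⟩ := hw ε hε
  have hfar := hT _ _ (grid_adj_add_dir (q T) i b) (le_of_max_le_right (hq T))
  linarith [abs_sub_le (w x (x + dir n i b)) (w (q T) (q T + dir n i b)) 1, htranslate T]

end Decay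

def outFace (n r : ℕ) (i : Fin n) (b : Bool) : Finset (Fin n → ℤ) :=
  (Qr n r).filter fun x => x + dir n i b ∉ Qr n r

section Faces

variable {n r : ℕ}

lemma nInf_eq_and_apply_eq_of_mem_outFace {x : Fin n → ℤ} {i : Fin n} {b : Bool}
    (hx : x ∈ outFace n r i b) : nInf x = r ∧ boolSign b * x i = r := by
  rw [outFace, Finset.mem_filter, mem_Qr_iff, mem_Qr_iff, nInf_le_iff, nInf_le_iff] at hx
  obtain ⟨hin, hout⟩ := hx
  push Not at hout
  obtain ⟨k, hk⟩ := hout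
  rw [add_dir_apply] at hk
  have hki : k = i := by
    by_contra h
    simp only [h, if_false, add_zero] at hk
    exact hk.not_ge (hin k)
  subst hki
  have hxk := natAbs_le_nInf x k
  have hr := nInf_le_iff.mpr hin
  cases b <;> simp only [boolSign, if_true, Bool.false_eq_true, if_false] at hk ⊢ <;> omega

lemma nInf_add_dir_of_mem_outFace {x : Fin n → ℤ} {i : Fin n} {b : Bool}
    (hx : x ∈ outFace n r i b) :
    nInf (x + dir n i b) = r + 1 ∧ nInf (x + dir n i b + dir n i b) = r + 2 := by
  obtain ⟨hnx, hxi⟩ := nInf_eq_and_apply_eq_of_mem_outFace hx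
  have h := nInf_add_smul_dir (hxi.trans (congrArg _ hnx.symm))
  have h1 := h 1
  have h2 := h 2
  rw [Nat.cast_one, one_smul, hnx] at h1
  rw [Nat.cast_ofNat, two_smul, ← add_assoc, hnx] at h2
  exact ⟨h1, h2⟩

lemma card_outFace_le (i : Fin n) (b : Bool) :
    (outFace n r i b).card ≤ (2 * r + 1) ^ (n - 1) := by
  classical
  set c := boolSign b * r
  set lo : Fin n → ℤ := Function.update (fun _ => -(r : ℤ)) i c
  set hi : Fin n → ℤ := Function.update (fun _ => (r : ℤ)) i c
  have hsub : outFace n r i b ⊆ Finset.Icc lo hi := by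
    intro x hx
    have hxi : x i = c := by
      have := (nInf_eq_and_apply_eq_of_mem_outFace hx).2
      cases b <;> simp only [c, boolSign, if_true, Bool.false_eq_true, if_false] at this ⊢ <;>
        omega
    have hQ := Finset.mem_Icc.mp (Finset.mem_filter.mp hx).1
    simp only [Finset.mem_Icc, Pi.le_def] at hQ ⊢
    refine ⟨fun k => ?_, fun k => ?_⟩ <;> by_cases hk : k = i <;>
      simp [lo, hi, hk, hxi, hQ.1 k, hQ.2 k]
  have hcompl :
      ∀ k ∈ ({i}ᶜ : Finset (Fin n)), (Finset.Icc (lo k) (hi k)).card = 2 * r + 1 := by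
    intro k hk
    rw [Finset.mem_compl, Finset.mem_singleton] at hk
    simp only [lo, hi, Function.update_of_ne hk, Int.card_Icc]
    omega
  refine (Finset.card_le_card hsub).trans (le_of_eq ?_)
  rw [Pi.card_Icc, Fintype.prod_eq_mul_prod_compl i, Finset.prod_congr rfl hcompl]
  simp [lo, hi, Finset.card_compl]

end Faces

section Mass

variable {n : ℕ} (w : (Fin n → ℤ) → (Fin n → ℤ) → ℝ) (r : ℕ)

lemma ErSum_eq_sum_outFace : ErSum n w r =
    ∑ ib : Fin n × Bool, ∑ x ∈ outFace n r ib.1 ib.2, w x (x + dir n ib.1 ib.2) := by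
  simp only [ErSum, outFace, Finset.sum_filter, Fintype.sum_prod_type, Fintype.sum_bool,
    add_dir_true, add_dir_false, ← Finset.sum_add_distrib]
  rw [Finset.sum_comm]

lemma TErSum_eq_sum : TErSum n w r =
    ∑ ib : Fin n × Bool, ∑ y ∈ Qr n (r + 1),
      if nInf y = r + 1 ∧ nInf (y + dir n ib.1 ib.2) = r + 2 then w y (y + dir n ib.1 ib.2)
      else 0 := by
  simp only [TErSum, Fintype.sum_prod_type, Fintype.sum_bool, add_dir_true, add_dir_false,
    ite_and, ← Finset.sum_add_distrib]
  rw [Finset.sum_comm]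
  refine Finset.sum_congr rfl fun y _ => ?_
  split_ifs <;> simp

variable {w}

lemma sum_outFace_le_TErSum (hw : ∀ x y, (grid n).Adj x y → 0 ≤ w x y) :
    ∑ ib : Fin n × Bool, ∑ x ∈ outFace n r ib.1 ib.2,
      w (x + dir n ib.1 ib.2) (x + dir n ib.1 ib.2 + dir n ib.1 ib.2) ≤ TErSum n w r := by
  rw [TErSum_eq_sum]
  refine Finset.sum_le_sum fun ⟨i, b⟩ _ => ?_
  set d := dir n i b
  set t : (Fin n → ℤ) → ℝ := fun y =>
    if nInf y = r + 1 ∧ nInf (y + d) = r + 2 then w y (y + d) else 0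
  have ht : ∀ y, 0 ≤ t y := fun y => by
    dsimp only [t]
    split_ifs
    exacts [hw _ _ (grid_adj_add_dir y i b), le_rfl]
  have hface : ∀ x ∈ outFace n r i b,
      x + d ∈ Qr n (r + 1) ∧ w (x + d) (x + d + d) = t (x + d) := by
    intro x hx
    obtain ⟨h1, h2⟩ := nInf_add_dir_of_mem_outFace hx
    exact ⟨mem_Qr_iff.mpr h1.le, (if_pos ⟨h1, h2⟩).symm⟩
  calc ∑ x ∈ outFace n r i b, w (x + d) (x + d + d)
      = ∑ x ∈ outFace n r i b, t (x + d) := Finset.sum_congr rfl fun x hx => (hface x hx).2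
    _ = ∑ y ∈ (outFace n r i b).image (· + d), t y :=
      (Finset.sum_image fun _ _ _ _ h => add_right_cancel h).symm
    _ ≤ ∑ y ∈ Qr n (r + 1), t y :=
      Finset.sum_le_sum_of_subset_of_nonneg
        (Finset.image_subset_iff.mpr fun x hx => (hface x hx).1) fun y _ _ => ht y

lemma ErSum_sub_TErSum_le (hw : ∀ x y, (grid n).Adj x y → 0 ≤ w x y) {δ : ℝ}
    (hδ0 : 0 ≤ δ) (hδ : ∀ x i b, r ≤ nInf x → |w x (x + dir n i b) - 1| ≤ δ) :
    ErSum n w r - TErSum n w r ≤ 2 * n * ((2 * r + 1) ^ (n - 1) * (2 * δ)) := by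
  have hpair : ∀ ib : Fin n × Bool, ∀ x ∈ outFace n r ib.1 ib.2,
      w x (x + dir n ib.1 ib.2) -
        w (x + dir n ib.1 ib.2) (x + dir n ib.1 ib.2 + dir n ib.1 ib.2) ≤ 2 * δ := by
    intro ⟨i, b⟩ x hx
    have h1 := abs_le.mp (hδ x i b (nInf_eq_and_apply_eq_of_mem_outFace hx).1.ge)
    have h2 := abs_le.mp
      (hδ (x + dir n i b) i b (r.le_succ.trans (nInf_add_dir_of_mem_outFace hx).1.ge))
    linarith [h1.2, h2.1]
  calc ErSum n w r - TErSum n w r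
      ≤ ∑ ib : Fin n × Bool, ∑ x ∈ outFace n r ib.1 ib.2, (w x (x + dir n ib.1 ib.2) -
          w (x + dir n ib.1 ib.2) (x + dir n ib.1 ib.2 + dir n ib.1 ib.2)) := by
        simp only [Finset.sum_sub_distrib, ErSum_eq_sum_outFace]
        linarith [sum_outFace_le_TErSum r hw]
    _ ≤ ∑ _ib : Fin n × Bool, ((2 * r + 1) ^ (n - 1) * (2 * δ) : ℝ) := by
        refine Finset.sum_le_sum fun ib _ =>
          (Finset.sum_le_card_nsmul _ _ _ (hpair ib)).trans ?_
        rw [nsmul_eq_mul]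
        gcongr
        exact_mod_cast card_outFace_le ib.1 ib.2
    _ = 2 * n * ((2 * r + 1) ^ (n - 1) * (2 * δ)) := by
        rw [Finset.sum_const, Finset.card_univ, Fintype.card_prod, Fintype.card_fin,
          Fintype.card_bool, nsmul_eq_mul]
        push_cast
        ring

end Mass

lemma tendsto_pow_mul_rpow_atTop_zero {n : ℕ} (hn : 1 ≤ n) {p : ℝ} (hp : (n : ℝ) < p) :
    Tendsto (fun r : ℕ => (2 * (r : ℝ) + 1) ^ (n - 1) * (r : ℝ) ^ (1 - p)) atTop
      (𝓝 0) := by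
  have hlim :
      Tendsto (fun r : ℕ => 3 ^ (n - 1) * (r : ℝ) ^ ((n : ℝ) - p)) atTop (𝓝 0) := by
    have := (tendsto_rpow_neg_atTop (sub_pos.mpr hp)).comp tendsto_natCast_atTop_atTop
    simpa [neg_sub] using this.const_mul (3 ^ (n - 1) : ℝ)
  refine tendsto_of_tendsto_of_tendsto_of_le_of_le' tendsto_const_nhds hlim
    (Eventually.of_forall fun r => by positivity) ?_
  filter_upwards [eventually_ge_atTop 1] with r hr
  have hr : (1 : ℝ) ≤ r := by exact_mod_cast hr
  calc (2 * (r : ℝ) + 1) ^ (n - 1) * (r : ℝ) ^ (1 - p)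
      ≤ (3 * r) ^ (n - 1) * (r : ℝ) ^ (1 - p) := by gcongr; linarith
    _ = 3 ^ (n - 1) * (r : ℝ) ^ ((n : ℝ) - p) := by
        rw [mul_pow, mul_assoc, ← Real.rpow_natCast (r : ℝ), ← Real.rpow_add (by linarith)]
        congr 2
        rw [Nat.cast_sub hn]
        ring

theorem AsympFlatGrid.mass_nonpos {n : ℕ} (hn : 2 ≤ n) {W : GridWeight n}
    (hW : AsympFlatGrid n W) {L : ℝ}
    (hL : Tendsto (fun r : ℕ => ErSum n W.w r - TErSum n W.w r) atTop (𝓝 L)) : L ≤ 0 := by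
  obtain ⟨p, hpn, hw, ⟨C, M, hM, hA⟩, -⟩ := hW
  have hp : (2 : ℝ) ≤ p := by linarith [show (2 : ℝ) ≤ n by exact_mod_cast hn]
  have hC : 0 ≤ C := nonneg_of_Absf_le (by omega) hM hA
  set bound : ℕ → ℝ := fun r =>
    2 * n * ((2 * r + 1) ^ (n - 1) * (2 * (8 * C * (r : ℝ) ^ (1 - p))))
  have hle : ∀ r ≥ M, ErSum n W.w r - TErSum n W.w r ≤ bound r := fun r hr =>
    ErSum_sub_TErSum_le r (fun x y h => (W.pos x y h).le) (by positivity) fun x i b hx =>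
      abs_weight_sub_one_le hn hp hM hC hw hA hr hx i b
  have hbound : Tendsto bound atTop (𝓝 0) := by
    have := (tendsto_pow_mul_rpow_atTop_zero (by omega) hpn).const_mul (32 * n * C)
    rw [mul_zero] at this
    exact this.congr fun r => by ring
  exact le_of_tendsto_of_tendsto hL hbound (eventually_atTop.mpr ⟨M, hle⟩)

/-- there is no asymptotically flat graph of dimension `2` with positive
ADM mass `E(G) = (1/(2²·2))·L > 0`. -/
theorem no_positive_mass_dim_two :
    ¬ ∃ (V : Type) (W : WGraph V) (Wg : GridWeight 2) (L : ℝ),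
        AsympFlatPair 2 W Wg ∧
        Tendsto (fun r : ℕ => ErSum 2 Wg.w r - TErSum 2 Wg.w r) atTop (𝓝 L) ∧
        0 < (1 / (2 ^ 2 * 2) : ℝ) * L := by
  rintro ⟨V, W, Wg, L, ⟨hflat, -⟩, hL, hpos⟩
  have := hflat.mass_nonpos le_rfl hL
  linarith

end PMT
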